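/- arXiv:math/0506429 — 2 statements merged into one kernel-verified Lean document; each statement's English description precedes it below -/
import Mathlib

section
/- In an abelian group G, suppose elements e_1, ..., e_n generate G and there is a biadditive pairing χ: G × G → Z such that χ(e_i, e_i) = 1 for all i and χ(e_j, e_i) = 0 for all j > i. Then (e_1, ..., e_n) is a free Z-basis of G, so G ≅ Z^n. -/
/-!
The pairing gives, for each `i`, the functional `χ(-, e i)`, which is `1` on `e i` and vanishes on
every later `e j`. Applying these functionals to a relation `∑ g j • e j = 0` in increasing order of
`i` kills the coefficients one at a time, so the generators are linearly independent, hence a basis.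
-/

theorem linearIndependent_of_triangular_dual {ι R M : Type*} [Fintype ι] [LinearOrder ι] [Ring R]
    [AddCommGroup M] [Module R M] {e : ι → M} (f : ι → M →ₗ[R] R)
    (hdiag : ∀ i, f i (e i) = 1) (htri : ∀ i j, i < j → f i (e j) = 0) :
    LinearIndependent R e := by
  rw [Fintype.linearIndependent_iff]
  intro g hg i
  induction i using WellFoundedLT.induction with
  | _ i ih =>
    have hfi : ∑ j, g j * f i (e j) = 0 := by simpa using congr_arg (f i) hg
    rwa [Finset.sum_eq_single i, hdiag, mul_one] at hfi
    · intro j _ hji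
      rcases hji.lt_or_gt with hj | hj
      · rw [ih j hj, zero_mul]
      · rw [htri i j hj, mul_zero]
    · exact fun hi => absurd (Finset.mem_univ i) hi

/-- If an abelian group `G` is generated by elements `e 0, ..., e (n-1)`
admitting a biadditive pairing `χ : G × G → ℤ` with `χ (e i) (e i) = 1` and
`χ (e j) (e i) = 0` whenever `i < j` (semi-orthonormality), then `(e 0, ..., e (n-1))`
is a free `ℤ`-basis of `G`; in particular `G ≅ ℤ^n`. -/
theorem stmt1 (G : Type*) [AddCommGroup G] (n : ℕ) (e : Fin n → G)
    (χ : G →+ G →+ ℤ)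
    (hgen : AddSubgroup.closure (Set.range e) = ⊤)
    (hdiag : ∀ i, χ (e i) (e i) = 1)
    (htri : ∀ i j : Fin n, i < j → χ (e j) (e i) = 0) :
    (∃ b : Module.Basis (Fin n) ℤ G, ∀ i, b i = e i) ∧
      Nonempty (G ≃+ (Fin n → ℤ)) := by
  have hli : LinearIndependent ℤ e :=
    linearIndependent_of_triangular_dual (fun i => (χ.flip (e i)).toIntLinearMap) hdiag htri
  have hspan : Submodule.span ℤ (Set.range e) = ⊤ :=
    Submodule.toAddSubgroup_injective (by rw [Submodule.span_int_eq_addSubgroupClosure, hgen]; rfl)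
  let b := Module.Basis.mk hli hspan.ge
  exact ⟨⟨b, Module.Basis.mk_apply hli hspan.ge⟩, ⟨b.equivFun.toAddEquiv⟩⟩
end

section
/- Let λ = (λ_1,...,λ_k) ∈ Z^k with −2n+2j−1 ≤ λ_j ≤ 0 for j = 1,...,k (where k ≤ n), set δ = λ + ρ with ρ = (k−1, k−2, ..., 0), and suppose σ ∈ S_k is such that σ(δ) is strictly decreasing. Write μ = σ(δ) − ρ and ν = (−μ_k,...,−μ_1). Then ν is a Young diagram with at most k rows and at most 2n−k columns, and if ν has exactly 2n−k−a+1 columns for some 1 ≤ a ≤ k−1, then ν has at least k−a+1 rows. Equivalently, (number of rows of ν) ≥ (number of columns of ν) − 2(n−k). -/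
private lemma gap_aux {k : ℕ} (g : Fin k → ℤ) (hg : StrictMono g) :
    ∀ d : ℕ, ∀ t s : Fin k, (s : ℕ) = (t : ℕ) + d → (d : ℤ) ≤ g s - g t := by
  intro d
  induction d with
  | zero =>
    intro t s h
    have : s = t := Fin.ext (by omega)
    simp [this]
  | succ d ih =>
    intro t s h
    have hs1 : (s : ℕ) - 1 < k := by omega
    have h1 : ((⟨(s : ℕ) - 1, hs1⟩ : Fin k) : ℕ) = (t : ℕ) + d := by simp; omega
    have h2 : g ⟨(s : ℕ) - 1, hs1⟩ < g s := hg (by simp [Fin.lt_def]; omega)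
    have := ih t ⟨(s : ℕ) - 1, hs1⟩ h1
    push_cast
    omega

/-- Let `λ ∈ ℤ^k` satisfy the bounds `−2n+2j−1 ≤ λ_j ≤ 0`
(`1`-indexed), i.e. `δ := λ + ρ` with `ρ = (k−1, ..., 0)` satisfies
`−(2n−k−j₀) ≤ δ_{j₀} ≤ k−1−j₀` in `0`-indexed form.  Suppose `σ ∈ S_k` is such that
`σ(δ)` (here `δ ∘ σ`) is strictly decreasing; set `μ = σ(δ) − ρ` and
`ν = (−μ_k, ..., −μ_1)`.  Then `ν` is a Young diagram with at most `k` rows and at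
most `2n−k` columns, and its number of rows (nonzero parts) is at least its number of
columns (largest part) minus `2(n−k)`. -/
theorem stmt18 (n k : ℕ) (hk : 1 ≤ k) (hkn : k ≤ n)
    (δ : Fin k → ℤ)
    (hbounds : ∀ j : Fin k,
      -((2 * n : ℤ) - k - (j : ℕ)) ≤ δ j ∧ δ j ≤ (k : ℤ) - 1 - (j : ℕ))
    (σ : Equiv.Perm (Fin k)) (hdec : StrictAnti (δ ∘ σ)) :
    -- `ν t = −μ_{rev t}` where `μ t = (δ ∘ σ) t − (k − 1 − t)`
    (∀ t : Fin k,
        0 ≤ -((δ ∘ σ) (Fin.rev t) - ((k : ℤ) - 1 - ((Fin.rev t : Fin k) : ℕ))) ∧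
        -((δ ∘ σ) (Fin.rev t) - ((k : ℤ) - 1 - ((Fin.rev t : Fin k) : ℕ))) ≤
          2 * (n : ℤ) - k) ∧
    Antitone (fun t : Fin k =>
        -((δ ∘ σ) (Fin.rev t) - ((k : ℤ) - 1 - ((Fin.rev t : Fin k) : ℕ)))) ∧
    (((Finset.univ.filter fun t : Fin k =>
        0 < -((δ ∘ σ) (Fin.rev t) - ((k : ℤ) - 1 - ((Fin.rev t : Fin k) : ℕ)))).card : ℤ) ≥
      -((δ ∘ σ) (Fin.rev ⟨0, by omega⟩) -
          ((k : ℤ) - 1 - ((Fin.rev (⟨0, by omega⟩ : Fin k) : Fin k) : ℕ))) -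
        2 * ((n : ℤ) - k)) := by
  set f : Fin k → ℤ := δ ∘ σ with hf
  set μ : Fin k → ℤ := fun s => f s - ((k : ℤ) - 1 - (s : ℕ)) with hμ
  -- gap lemma for the strictly decreasing f
  have hgap : ∀ t s : Fin k, (t : ℕ) ≤ (s : ℕ) → ((s : ℕ) : ℤ) - (t : ℕ) ≤ f t - f s := by
    intro t s h
    have := gap_aux (fun x => -(f x)) (fun a b hab => by simpa using hdec hab)
      ((s : ℕ) - (t : ℕ)) t s (by omega)
    push_cast [Nat.cast_sub h] at this
    omega
  have hz : (0 : ℕ) < k := hk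
  have hL : k - 1 < k := by omega
  set L : Fin k := ⟨k - 1, hL⟩ with hLdef
  -- upper bound: μ s ≤ 0
  have hμ0 : ∀ s : Fin k, μ s ≤ 0 := by
    intro s
    have h1 := hgap ⟨0, hz⟩ s (Nat.zero_le _)
    have h2 := (hbounds (σ ⟨0, hz⟩)).2
    simp only [hμ, hf, Function.comp] at *
    have : ((σ ⟨0, hz⟩ : Fin k) : ℕ) ≥ 0 := Nat.zero_le _
    have hcast : ((((σ ⟨0, hz⟩ : Fin k)) : ℕ) : ℤ) ≥ 0 := by positivity
    simp at h1
    omega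
  -- lower bound: μ s ≥ -(2n - k)
  have hμlow : ∀ s : Fin k, -(2 * (n : ℤ) - k) ≤ μ s := by
    intro s
    have h1 := hgap s L (show (s : ℕ) ≤ k - 1 by omega)
    have hLn : ((L : Fin k) : ℕ) = k - 1 := rfl
    rw [hLn] at h1
    push_cast [Nat.cast_sub hk] at h1
    have h2 := (hbounds (σ L)).1
    have h4 : (0 : ℤ) ≤ (((σ L : Fin k) : ℕ) : ℤ) := Int.ofNat_nonneg _
    simp only [hμ, hf, Function.comp] at *
    omega
  -- antitonicity of μ
  have hμanti : ∀ t s : Fin k, (t : ℕ) ≤ (s : ℕ) → μ s ≤ μ t := by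
    intro t s h
    have := hgap t s h
    simp only [hμ]
    omega
  refine ⟨?_, ?_, ?_⟩
  · intro t
    exact ⟨by have := hμ0 (Fin.rev t); simp only [hμ, hf] at this ⊢; omega,
           by have := hμlow (Fin.rev t); simp only [hμ, hf] at this ⊢; omega⟩
  · intro t s hts
    have hrev : ((Fin.rev s : Fin k) : ℕ) ≤ ((Fin.rev t : Fin k) : ℕ) := by
      simp [Fin.rev]; omega
    have := hμanti (Fin.rev s) (Fin.rev t) hrev
    simp only [hμ, hf] at this ⊢
    omega
  · -- the cardinality bound
    have hcard : (Finset.univ.filter fun t : Fin k =>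
        0 < -((δ ∘ σ) (Fin.rev t) - ((k : ℤ) - 1 - ((Fin.rev t : Fin k) : ℕ)))).card
        = (Finset.univ.filter fun s : Fin k => μ s < 0).card := by
      apply Finset.card_bij (fun t _ => Fin.rev t)
      · intro a ha
        simp only [Finset.mem_filter, Finset.mem_univ, true_and] at ha ⊢
        simp only [hμ, hf]; omega
      · intro a _ b _ h
        exact Fin.rev_injective h
      · intro b hb
        refine ⟨Fin.rev b, ?_, by simp⟩
        simp only [Finset.mem_filter, Finset.mem_univ, true_and, Fin.rev_rev] at hb ⊢
        simp only [hμ, hf] at hb; omega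
    rw [hcard]
    set c : ℕ := (Finset.univ.filter fun s : Fin k => μ s < 0).card with hc
    -- initial segment: μ s = 0 for s < k - c
    have claim1 : ∀ s : Fin k, (s : ℕ) < k - c → μ s = 0 := by
      intro s hs
      by_contra hne
      have hneg : μ s < 0 := lt_of_le_of_ne (hμ0 s) hne
      have hsub : Finset.Ici s ⊆ Finset.univ.filter fun r : Fin k => μ r < 0 := by
        intro r hr
        simp only [Finset.mem_Ici] at hr
        simp only [Finset.mem_filter, Finset.mem_univ, true_and]
        exact lt_of_le_of_lt (hμanti s r hr) hneg
      have := Finset.card_le_card hsub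
      rw [Fin.card_Ici] at this
      omega
    -- σ fixes the initial segment
    have claim2 : ∀ m : ℕ, ∀ s : Fin k, (s : ℕ) = m → (s : ℕ) < k - c → σ s = s := by
      intro m
      induction m using Nat.strong_induction_on with
      | _ m ih =>
        intro s hsm hs
        have hμs := claim1 s hs
        have hb := (hbounds (σ s)).2
        simp only [hμ, hf, Function.comp] at hμs
        have hle : ((σ s : Fin k) : ℕ) ≤ (s : ℕ) := by
          by_contra hgt
          push_neg at hgt
          have : ((s : ℕ) : ℤ) < ((σ s : Fin k) : ℕ) := by exact_mod_cast hgt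
          omega
        rcases Nat.lt_or_ge ((σ s : Fin k) : ℕ) (s : ℕ) with hlt | hge
        · exfalso
          have hvlt : ((σ s : Fin k) : ℕ) < k := (σ s).2
          have hσr : σ ⟨((σ s : Fin k) : ℕ), hvlt⟩ = ⟨((σ s : Fin k) : ℕ), hvlt⟩ :=
            ih ((σ s : Fin k) : ℕ) (by omega) ⟨((σ s : Fin k) : ℕ), hvlt⟩ rfl
              (by show ((σ s : Fin k) : ℕ) < k - c; omega)
          have heq : s = ⟨((σ s : Fin k) : ℕ), hvlt⟩ :=
            σ.injective (by rw [hσr])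
          have hv : (s : ℕ) = ((σ s : Fin k) : ℕ) := congrArg Fin.val heq
          omega
        · exact Fin.ext (by omega)
    -- conclude
    have hrev0 : Fin.rev (⟨0, by omega⟩ : Fin k) = L := Fin.ext (by simp [Fin.rev, hLdef])
    rw [hrev0]
    have hLval : ((L : Fin k) : ℕ) = k - 1 := rfl
    have hcastL : (((k - 1 : ℕ)) : ℤ) = (k : ℤ) - 1 := by push_cast [Nat.cast_sub hk]; ring
    rcases Nat.eq_zero_or_pos c with hc0 | hcpos
    · -- c = 0 : μ L = 0
      have := claim1 L (by omega)
      simp only [hμ, hf] at this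
      rw [hc0]
      simp only [hf] at this ⊢
      push_cast
      omega
    · -- c ≥ 1 : σ L ≥ k - c
      have hσL : k - c ≤ ((σ L : Fin k) : ℕ) := by
        by_contra hlt
        push_neg at hlt
        have hvlt : ((σ L : Fin k) : ℕ) < k := (σ L).2
        have hσr : σ ⟨((σ L : Fin k) : ℕ), hvlt⟩ = ⟨((σ L : Fin k) : ℕ), hvlt⟩ :=
          claim2 _ ⟨((σ L : Fin k) : ℕ), hvlt⟩ rfl
            (by show ((σ L : Fin k) : ℕ) < k - c; omega)
        have heq : L = ⟨((σ L : Fin k) : ℕ), hvlt⟩ :=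
          σ.injective (by rw [hσr])
        have hv : k - 1 = ((σ L : Fin k) : ℕ) := congrArg Fin.val heq
        omega
      have hb := (hbounds (σ L)).1
      have hcast : ((k - c : ℕ) : ℤ) ≤ (((σ L : Fin k) : ℕ) : ℤ) := by exact_mod_cast hσL
      have hck : c ≤ k := by
        rw [hc]
        exact le_trans (Finset.card_filter_le _ _) (by simp)
      push_cast [Nat.cast_sub hck] at hcast
      simp only [hf, Function.comp] at hb ⊢
      omega
end
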